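/- arXiv:2206.07346 — 2 statements merged into one kernel-verified Lean document; each statement's English description precedes it below -/
import Mathlib

section
/- Let d ≥ 2 and S > 0, and suppose A, B ≥ 0 satisfy A − B > 0 and (1/2)A − ((d−1)/(2(d+1)))B < S^{(d+1)/2}/(d+1), where B ≤ S^{−(d+1)/(d−1)} A^{(d+1)/(d−1)}. Then A < S^{(d+1)/2}. -/
open Real

/-- Scalar core of the Kenig–Merle energy trapping: if `A, B ≥ 0`, `A − B > 0`,
`(1/2)A − ((d−1)/(2(d+1)))B < S^{(d+1)/2}/(d+1)` and
`B ≤ S^{−(d+1)/(d−1)} A^{(d+1)/(d−1)}`, then `A < S^{(d+1)/2}`. -/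
theorem scalar_energy_trapping (d : ℕ) (hd : 2 ≤ d) (S A B : ℝ) (hS : 0 < S)
    (hA : 0 ≤ A) (hB : 0 ≤ B) (hAB : 0 < A - B)
    (hE : (1 / 2) * A - (((d : ℝ) - 1) / (2 * ((d : ℝ) + 1))) * B
      < S ^ (((d : ℝ) + 1) / 2) / ((d : ℝ) + 1))
    (hSob : B ≤ S ^ (-(((d : ℝ) + 1) / ((d : ℝ) - 1))) * A ^ (((d : ℝ) + 1) / ((d : ℝ) - 1))) :
    A < S ^ (((d : ℝ) + 1) / 2) := by
  have hd1 : (2 : ℝ) ≤ (d : ℝ) := by exact_mod_cast hd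
  have hdp : (0 : ℝ) < (d : ℝ) + 1 := by linarith
  have hc : 0 ≤ ((d : ℝ) - 1) / (2 * ((d : ℝ) + 1)) := div_nonneg (by linarith) (by linarith)
  have hBA : B < A := by linarith
  have key : A / ((d : ℝ) + 1) ≤ (1 / 2) * A - (((d : ℝ) - 1) / (2 * ((d : ℝ) + 1))) * B := by
    have h1 : (((d : ℝ) - 1) / (2 * ((d : ℝ) + 1))) * B ≤
        (((d : ℝ) - 1) / (2 * ((d : ℝ) + 1))) * A :=
      mul_le_mul_of_nonneg_left hBA.le hc
    have h2 : (1 / 2) * A - (((d : ℝ) - 1) / (2 * ((d : ℝ) + 1))) * A = A / ((d : ℝ) + 1) := by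
      field_simp; ring
    linarith
  have := lt_of_le_of_lt key hE
  calc A = (A / ((d : ℝ) + 1)) * ((d : ℝ) + 1) := by field_simp
    _ < (S ^ (((d : ℝ) + 1) / 2) / ((d : ℝ) + 1)) * ((d : ℝ) + 1) := by
        exact mul_lt_mul_of_pos_right this hdp
    _ = S ^ (((d : ℝ) + 1) / 2) := by field_simp
end

section
/- Let d ≥ 2 and φ ∈ H^1(R^d × T) satisfy E(φ) < m_{M(φ)} and K(φ) < 0. Then K(φ) ≤ E(φ) − m_{M(φ)}. -/
open MeasureTheory Real Set

noncomputable section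

abbrev Edim (d : ℕ) := EuclideanSpace ℝ (Fin d)

/-- A fundamental domain `ℝ^d × (0, 2π]` representing `ℝ^d × 𝕋`. -/
def strip (d : ℕ) : Set (Edim d × ℝ) := Set.univ ×ˢ Set.Ioc 0 (2 * π)

/-- `M(u) = ‖u‖₂²` over `ℝ^d × 𝕋`. -/
def massF (d : ℕ) (u : Edim d × ℝ → ℂ) : ℝ := ∫ z in strip d, ‖u z‖ ^ 2

/-- `‖∇ₓ u‖₂²` over `ℝ^d × 𝕋`. -/
def gradxSq (d : ℕ) (u : Edim d × ℝ → ℂ) : ℝ :=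
  ∫ z in strip d, ∑ i : Fin d, ‖fderiv ℝ u z (EuclideanSpace.single i 1, 0)‖ ^ 2

/-- `‖∂_y u‖₂²` over `ℝ^d × 𝕋`. -/
def gradySq (d : ℕ) (u : Edim d × ℝ → ℂ) : ℝ :=
  ∫ z in strip d, ‖fderiv ℝ u z (0, 1)‖ ^ 2

/-- `‖u‖_p^p` over `ℝ^d × 𝕋`. -/
def lpPow (d : ℕ) (u : Edim d × ℝ → ℂ) (p : ℝ) : ℝ := ∫ z in strip d, ‖u z‖ ^ p

/-- The exponent `2 + 4/(d-1)`. -/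
def qExp (d : ℕ) : ℝ := 2 + 4 / ((d : ℝ) - 1)

/-- The energy `E(u)`. -/
def energyF (d : ℕ) (u : Edim d × ℝ → ℂ) : ℝ :=
  (1 / 2) * (gradxSq d u + gradySq d u)
    - (((d : ℝ) - 1) / (2 * ((d : ℝ) + 1))) * lpPow d u (qExp d)

/-- The semivirial `K(u)`. -/
def KF (d : ℕ) (u : Edim d × ℝ → ℂ) : ℝ :=
  gradxSq d u - ((d : ℝ) / ((d : ℝ) + 1)) * lpPow d u (qExp d)

/-- The functional `I(u)`. -/
def IF (d : ℕ) (u : Edim d × ℝ → ℂ) : ℝ :=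
  (1 / 2) * gradySq d u + (1 / (2 * ((d : ℝ) + 1))) * lpPow d u (qExp d)

/-- Membership in `H¹(ℝ^d × 𝕋)`: `2π`-periodicity in `y`, differentiability, and
integrability of `|u|²`, `|∇u|²` and `|u|^q` on a fundamental domain. -/
def InH1 (d : ℕ) (u : Edim d × ℝ → ℂ) : Prop :=
  (∀ x y, u (x, y + 2 * π) = u (x, y)) ∧ Differentiable ℝ u ∧
  IntegrableOn (fun z => ‖u z‖ ^ 2) (strip d) ∧
  IntegrableOn (fun z => ‖fderiv ℝ u z‖ ^ 2) (strip d) ∧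
  IntegrableOn (fun z => ‖u z‖ ^ qExp d) (strip d)

/-- `m_c`, the infimum of the energy on the semivirial-vanishing manifold with mass `c`. -/
def mGround (d : ℕ) (c : ℝ) : ℝ :=
  sInf {e | ∃ u, InH1 d u ∧ massF d u = c ∧ KF d u = 0 ∧ energyF d u = e}

end

/-! ### Auxiliary development -/

noncomputable section Aux
open scoped BigOperators

variable {d : ℕ} {t : ℝ}

/-! #### Change of variables on the strip -/

/-- The scaling map as a measurable equiv. -/
def scalEquiv (d : ℕ) (ht : t ≠ 0) : (Edim d × ℝ) ≃ᵐ (Edim d × ℝ) :=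
  ((Homeomorph.smul (isUnit_iff_ne_zero.2 ht).unit).prodCongr (Homeomorph.refl ℝ)).toMeasurableEquiv

lemma smul_prod_meas {α β : Type*} [MeasurableSpace α] [MeasurableSpace β]
    (c : ENNReal) (μ : Measure α) (ν : Measure β) [SigmaFinite ν] :
    (c • μ).prod ν = c • (μ.prod ν) := by
  ext s hs
  simp [Measure.prod_apply hs, MeasureTheory.lintegral_smul_measure]

lemma map_scal (ht : 0 < t) :
    Measure.map (scalEquiv d ht.ne') (volume.restrict (strip d))
      = ENNReal.ofReal ((t ^ d)⁻¹) • volume.restrict (strip d) := by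
  have h1 : (volume : Measure (Edim d × ℝ)).restrict (strip d)
      = (volume : Measure (Edim d)).prod (volume.restrict (Ioc 0 (2*π))) := by
    rw [Measure.volume_eq_prod, strip, ← Measure.prod_restrict, Measure.restrict_univ]
  rw [h1]
  have h2 : (scalEquiv d ht.ne' : Edim d × ℝ → Edim d × ℝ)
      = Prod.map (fun x : Edim d => t • x) (id : ℝ → ℝ) := by
    ext z <;> rfl
  rw [h2, ← Measure.map_prod_map _ _ (measurable_const_smul t) measurable_id, Measure.map_id,
    Measure.map_addHaar_smul volume ht.ne']
  rw [smul_prod_meas]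
  congr 2
  rw [finrank_euclideanSpace_fin, abs_of_nonneg (by positivity)]

/-- Change of variables on the strip. -/
lemma integral_strip_scal (ht : 0 < t) (g : Edim d × ℝ → ℝ) :
    ∫ z in strip d, g (t • z.1, z.2) = (t ^ d)⁻¹ * ∫ z in strip d, g z := by
  have he := (scalEquiv d ht.ne').measurableEmbedding
  calc ∫ z in strip d, g (t • z.1, z.2)
      = ∫ z, g (scalEquiv d ht.ne' z) ∂(volume.restrict (strip d)) := rfl
    _ = ∫ w, g w ∂(Measure.map (scalEquiv d ht.ne') (volume.restrict (strip d))) :=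
        (he.integral_map _).symm
    _ = (t ^ d)⁻¹ * ∫ z in strip d, g z := by
        rw [map_scal ht, integral_smul_measure, ENNReal.toReal_ofReal (by positivity), smul_eq_mul]

lemma integrableOn_strip_scal (ht : 0 < t) (g : Edim d × ℝ → ℝ)
    (hg : IntegrableOn g (strip d)) :
    IntegrableOn (fun z : Edim d × ℝ => g (t • z.1, z.2)) (strip d) := by
  have he := (scalEquiv d ht.ne').measurableEmbedding
  have : Integrable g (Measure.map (scalEquiv d ht.ne') (volume.restrict (strip d))) := by
    rw [map_scal ht]
    exact hg.smul_measure (by simp)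
  exact he.integrable_map_iff.1 this

/-! #### The scaled function -/

def Tmap (d : ℕ) (t : ℝ) : (Edim d × ℝ) →L[ℝ] (Edim d × ℝ) :=
  (t • (ContinuousLinearMap.fst ℝ (Edim d) ℝ)).prod (ContinuousLinearMap.snd ℝ (Edim d) ℝ)

lemma Tmap_apply (z : Edim d × ℝ) : Tmap d t z = (t • z.1, z.2) := rfl

def scalFun (d : ℕ) (t : ℝ) (φ : Edim d × ℝ → ℂ) : Edim d × ℝ → ℂ :=
  fun z => (t ^ ((d : ℝ)/2) : ℝ) • φ (t • z.1, z.2)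

lemma scalFun_hasFDerivAt (φ : Edim d × ℝ → ℂ) (hφ : Differentiable ℝ φ) (z : Edim d × ℝ) :
    HasFDerivAt (scalFun d t φ)
      ((t ^ ((d : ℝ)/2) : ℝ) • ((fderiv ℝ φ (t • z.1, z.2)).comp (Tmap d t))) z := by
  have h1 : HasFDerivAt (fun w => φ (Tmap d t w))
      ((fderiv ℝ φ (Tmap d t z)).comp (Tmap d t)) z :=
    ((hφ (Tmap d t z)).hasFDerivAt).comp z (Tmap d t).hasFDerivAt
  exact h1.const_smul (t ^ ((d : ℝ)/2) : ℝ)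

lemma scalFun_fderiv (φ : Edim d × ℝ → ℂ) (hφ : Differentiable ℝ φ) (z : Edim d × ℝ) :
    fderiv ℝ (scalFun d t φ) z
      = (t ^ ((d : ℝ)/2) : ℝ) • ((fderiv ℝ φ (t • z.1, z.2)).comp (Tmap d t)) :=
  (scalFun_hasFDerivAt φ hφ z).fderiv

lemma scalFun_fderiv_x (φ : Edim d × ℝ → ℂ) (hφ : Differentiable ℝ φ) (z : Edim d × ℝ)
    (i : Fin d) :
    fderiv ℝ (scalFun d t φ) z (EuclideanSpace.single i 1, 0)
      = ((t ^ ((d : ℝ)/2) * t : ℝ)) • fderiv ℝ φ (t • z.1, z.2) (EuclideanSpace.single i 1, 0) := by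
  rw [scalFun_fderiv φ hφ z]
  have : (Tmap d t) (EuclideanSpace.single i 1, 0)
      = t • ((EuclideanSpace.single i 1 : Edim d), (0:ℝ)) := by
    simp [Tmap_apply, Prod.smul_mk]
  simp only [ContinuousLinearMap.coe_smul', Pi.smul_apply, ContinuousLinearMap.coe_comp',
    Function.comp_apply, this, _root_.map_smul, mul_smul]

lemma scalFun_fderiv_y (φ : Edim d × ℝ → ℂ) (hφ : Differentiable ℝ φ) (z : Edim d × ℝ) :
    fderiv ℝ (scalFun d t φ) z ((0 : Edim d), (1:ℝ))
      = ((t ^ ((d : ℝ)/2) : ℝ)) • fderiv ℝ φ (t • z.1, z.2) ((0 : Edim d), (1:ℝ)) := by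
  rw [scalFun_fderiv φ hφ z]
  have : (Tmap d t) ((0 : Edim d), (1:ℝ)) = ((0 : Edim d), (1:ℝ)) := by
    simp [Tmap_apply]
  simp only [ContinuousLinearMap.coe_smul', Pi.smul_apply, ContinuousLinearMap.coe_comp',
    Function.comp_apply, this]

lemma rpow_sq (ht : 0 < t) : (t ^ ((d : ℝ)/2)) ^ 2 = t ^ d := by
  rw [← Real.rpow_natCast (t ^ ((d:ℝ)/2)) 2, ← Real.rpow_mul ht.le, ← Real.rpow_natCast t d]
  norm_num

/-! #### Scaling identities for the functionals -/

lemma scal_mass (φ : Edim d × ℝ → ℂ) (ht : 0 < t) :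
    massF d (scalFun d t φ) = massF d φ := by
  have h : ∀ z : Edim d × ℝ, ‖scalFun d t φ z‖ ^ 2
      = (t ^ d : ℝ) * (fun w => ‖φ w‖ ^ 2) (t • z.1, z.2) := by
    intro z
    simp only [scalFun, norm_smul, mul_pow, Real.norm_eq_abs,
      abs_of_nonneg (Real.rpow_nonneg ht.le _), rpow_sq ht]
  calc massF d (scalFun d t φ)
      = ∫ z in strip d, (t ^ d : ℝ) * (fun w => ‖φ w‖ ^ 2) (t • z.1, z.2) := by
        unfold massF; simp only [h]
    _ = (t ^ d : ℝ) * ∫ z in strip d, (fun w => ‖φ w‖ ^ 2) (t • z.1, z.2) :=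
        integral_const_mul _ _
    _ = (t ^ d : ℝ) * ((t ^ d)⁻¹ * ∫ z in strip d, ‖φ z‖ ^ 2) := by
        rw [integral_strip_scal ht (fun w => ‖φ w‖ ^ 2)]
    _ = massF d φ := by
        rw [massF, ← mul_assoc, mul_inv_cancel₀ (by positivity), one_mul]

def alphaE (d : ℕ) : ℝ := 2 * (d : ℝ) / ((d : ℝ) - 1)

lemma hd1 (hd : 2 ≤ d) : (1:ℝ) ≤ (d : ℝ) - 1 := by
  have : (2:ℝ) ≤ (d:ℝ) := by exact_mod_cast hd
  linarith

lemma scal_gradx (φ : Edim d × ℝ → ℂ) (hφ : Differentiable ℝ φ) (ht : 0 < t) :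
    gradxSq d (scalFun d t φ) = t ^ 2 * gradxSq d φ := by
  have h : ∀ z : Edim d × ℝ,
      (∑ i : Fin d, ‖fderiv ℝ (scalFun d t φ) z (EuclideanSpace.single i 1, 0)‖ ^ 2)
      = ((t ^ ((d:ℝ)/2) * t) ^ 2) *
        (fun w => ∑ i : Fin d, ‖fderiv ℝ φ w (EuclideanSpace.single i 1, 0)‖ ^ 2)
          (t • z.1, z.2) := by
    intro z
    simp only [scalFun_fderiv_x φ hφ z, norm_smul, Real.norm_eq_abs, mul_pow, sq_abs,
      Finset.mul_sum]
  calc gradxSq d (scalFun d t φ)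
      = ∫ z in strip d, ((t ^ ((d:ℝ)/2) * t) ^ 2) *
        (fun w => ∑ i : Fin d, ‖fderiv ℝ φ w (EuclideanSpace.single i 1, 0)‖ ^ 2)
          (t • z.1, z.2) := by
        unfold gradxSq; simp only [h]
    _ = ((t ^ ((d:ℝ)/2) * t) ^ 2) * ((t ^ d)⁻¹ * gradxSq d φ) := by
        rw [integral_const_mul,
          integral_strip_scal ht
            (fun w => ∑ i : Fin d, ‖fderiv ℝ φ w (EuclideanSpace.single i 1, 0)‖ ^ 2)]
        rfl
    _ = t ^ 2 * gradxSq d φ := by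
        rw [mul_pow, rpow_sq ht]
        field_simp

lemma scal_grady (φ : Edim d × ℝ → ℂ) (hφ : Differentiable ℝ φ) (ht : 0 < t) :
    gradySq d (scalFun d t φ) = gradySq d φ := by
  have h : ∀ z : Edim d × ℝ,
      ‖fderiv ℝ (scalFun d t φ) z ((0 : Edim d), (1:ℝ))‖ ^ 2
      = (t ^ d : ℝ) * (fun w => ‖fderiv ℝ φ w ((0 : Edim d), (1:ℝ))‖ ^ 2) (t • z.1, z.2) := by
    intro z
    simp only [scalFun_fderiv_y φ hφ z, norm_smul, Real.norm_eq_abs, mul_pow, sq_abs,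
      rpow_sq ht]
  calc gradySq d (scalFun d t φ)
      = ∫ z in strip d, (t ^ d : ℝ) *
          (fun w => ‖fderiv ℝ φ w ((0 : Edim d), (1:ℝ))‖ ^ 2) (t • z.1, z.2) := by
        unfold gradySq; simp only [h]
    _ = (t ^ d : ℝ) * ((t ^ d)⁻¹ * gradySq d φ) := by
        rw [integral_const_mul,
          integral_strip_scal ht (fun w => ‖fderiv ℝ φ w ((0 : Edim d), (1:ℝ))‖ ^ 2)]
        rfl
    _ = gradySq d φ := by
        rw [← mul_assoc, mul_inv_cancel₀ (by positivity), one_mul]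

lemma scal_lp (hd : 2 ≤ d) (φ : Edim d × ℝ → ℂ) (ht : 0 < t) :
    lpPow d (scalFun d t φ) (qExp d) = t ^ (alphaE d) * lpPow d φ (qExp d) := by
  have hq0 : 0 ≤ qExp d := by
    have := hd1 hd
    have h4 : (0:ℝ) ≤ 4 / ((d:ℝ) - 1) := div_nonneg (by norm_num) (by linarith)
    unfold qExp; linarith
  have h : ∀ z : Edim d × ℝ, ‖scalFun d t φ z‖ ^ (qExp d)
      = (t ^ ((d:ℝ)/2 * qExp d)) * (fun w => ‖φ w‖ ^ (qExp d)) (t • z.1, z.2) := by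
    intro z
    simp only [scalFun, norm_smul, Real.norm_eq_abs, abs_of_nonneg (Real.rpow_nonneg ht.le _)]
    rw [Real.mul_rpow (Real.rpow_nonneg ht.le _) (norm_nonneg _), ← Real.rpow_mul ht.le]
  calc lpPow d (scalFun d t φ) (qExp d)
      = ∫ z in strip d, (t ^ ((d:ℝ)/2 * qExp d)) *
          (fun w => ‖φ w‖ ^ (qExp d)) (t • z.1, z.2) := by
        unfold lpPow; simp only [h]
    _ = (t ^ ((d:ℝ)/2 * qExp d)) * ((t ^ d)⁻¹ * lpPow d φ (qExp d)) := by
        rw [integral_const_mul, integral_strip_scal ht (fun w => ‖φ w‖ ^ (qExp d))]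
        rfl
    _ = t ^ (alphaE d) * lpPow d φ (qExp d) := by
        have hd1' : (d:ℝ) - 1 ≠ 0 := by have := hd1 hd; linarith
        have : (d:ℝ)/2 * qExp d - d = alphaE d := by
          unfold qExp alphaE; field_simp; ring
        rw [← this, Real.rpow_sub ht, Real.rpow_natCast]
        field_simp


set_option maxHeartbeats 1000000 in
lemma scal_inH1 (hd : 2 ≤ d) (φ : Edim d × ℝ → ℂ) (hφ : InH1 d φ) (ht : 0 < t) :
    InH1 d (scalFun d t φ) := by
  obtain ⟨hper, hdiff, hint2, hintD, hintq⟩ := hφ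
  refine ⟨?_, ?_, ?_, ?_, ?_⟩
  · intro x y
    simp only [scalFun]
    rw [hper]
  · intro z
    exact (scalFun_hasFDerivAt φ hdiff z).differentiableAt
  · have h : ∀ z : Edim d × ℝ, ‖scalFun d t φ z‖ ^ 2
        = (t ^ d : ℝ) * (fun w => ‖φ w‖ ^ 2) (t • z.1, z.2) := by
      intro z
      simp only [scalFun, norm_smul, mul_pow, Real.norm_eq_abs,
        abs_of_nonneg (Real.rpow_nonneg ht.le _), rpow_sq ht]
    simp only [h]
    exact (integrableOn_strip_scal ht (fun w => ‖φ w‖ ^ 2) hint2).const_mul _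
  · have hmeas : AEStronglyMeasurable (fun z => ‖fderiv ℝ (scalFun d t φ) z‖ ^ 2)
        (volume.restrict (strip d)) :=
      (((measurable_fderiv ℝ (scalFun d t φ)).norm).pow_const 2).aestronglyMeasurable
    refine Integrable.mono'
      ((integrableOn_strip_scal ht (fun w => ‖fderiv ℝ φ w‖ ^ 2) hintD).const_mul
        ((t ^ ((d:ℝ)/2) * ‖Tmap d t‖) ^ 2)) hmeas ?_
    refine Filter.Eventually.of_forall fun z => ?_
    rw [Real.norm_eq_abs, abs_of_nonneg (by positivity)]
    rw [scalFun_fderiv φ hdiff z]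
    have h1 : ‖(t ^ ((d:ℝ)/2) : ℝ) • ((fderiv ℝ φ (t • z.1, z.2)).comp (Tmap d t))‖
        ≤ t ^ ((d:ℝ)/2) * ‖Tmap d t‖ * ‖fderiv ℝ φ (t • z.1, z.2)‖ := by
      calc ‖(t ^ ((d:ℝ)/2) : ℝ) • ((fderiv ℝ φ (t • z.1, z.2)).comp (Tmap d t))‖
          ≤ ‖(t ^ ((d:ℝ)/2) : ℝ)‖ * ‖(fderiv ℝ φ (t • z.1, z.2)).comp (Tmap d t)‖ :=
            ContinuousLinearMap.opNorm_smul_le _ _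
        _ ≤ ‖(t ^ ((d:ℝ)/2) : ℝ)‖ * (‖fderiv ℝ φ (t • z.1, z.2)‖ * ‖Tmap d t‖) :=
            mul_le_mul_of_nonneg_left (ContinuousLinearMap.opNorm_comp_le _ _) (norm_nonneg _)
        _ = t ^ ((d:ℝ)/2) * ‖Tmap d t‖ * ‖fderiv ℝ φ (t • z.1, z.2)‖ := by
            rw [Real.norm_eq_abs, abs_of_nonneg (Real.rpow_nonneg ht.le _)]; ring
    calc ‖(t ^ ((d:ℝ)/2) : ℝ) • ((fderiv ℝ φ (t • z.1, z.2)).comp (Tmap d t))‖ ^ 2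
        ≤ (t ^ ((d:ℝ)/2) * ‖Tmap d t‖ * ‖fderiv ℝ φ (t • z.1, z.2)‖) ^ 2 := by
          apply pow_le_pow_left₀ (norm_nonneg _) h1
      _ = (t ^ ((d:ℝ)/2) * ‖Tmap d t‖) ^ 2 * ‖fderiv ℝ φ (t • z.1, z.2)‖ ^ 2 := by ring
  · have hq0 : 0 ≤ qExp d := by
      have := hd1 hd
      have h4 : (0:ℝ) ≤ 4 / ((d:ℝ) - 1) := div_nonneg (by norm_num) (by linarith)
      unfold qExp; linarith
    have h : ∀ z : Edim d × ℝ, ‖scalFun d t φ z‖ ^ (qExp d)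
        = (t ^ ((d:ℝ)/2 * qExp d)) * (fun w => ‖φ w‖ ^ (qExp d)) (t • z.1, z.2) := by
      intro z
      simp only [scalFun, norm_smul, Real.norm_eq_abs, abs_of_nonneg (Real.rpow_nonneg ht.le _)]
      rw [Real.mul_rpow (Real.rpow_nonneg ht.le _) (norm_nonneg _), ← Real.rpow_mul ht.le]
    simp only [h]
    exact (integrableOn_strip_scal ht (fun w => ‖φ w‖ ^ (qExp d)) hintq).const_mul _


lemma lpPow_nonneg (φ : Edim d × ℝ → ℂ) (p : ℝ) : 0 ≤ lpPow d φ p :=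
  integral_nonneg fun z => Real.rpow_nonneg (norm_nonneg _) _

lemma gradxSq_nonneg (φ : Edim d × ℝ → ℂ) : 0 ≤ gradxSq d φ :=
  integral_nonneg fun z => Finset.sum_nonneg fun i _ => sq_nonneg _

lemma gradySq_nonneg (φ : Edim d × ℝ → ℂ) : 0 ≤ gradySq d φ :=
  integral_nonneg fun z => sq_nonneg _

lemma massF_nonneg (φ : Edim d × ℝ → ℂ) : 0 ≤ massF d φ :=
  integral_nonneg fun z => sq_nonneg _

set_option maxHeartbeats 1000000 in
lemma key_lemma (hd : 2 ≤ d) (φ : Edim d × ℝ → ℂ) (hφ : InH1 d φ) (hK : KF d φ < 0)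
    (hA : 0 < gradxSq d φ)
    (hbdd : BddBelow {e | ∃ u, InH1 d u ∧ massF d u = massF d φ ∧ KF d u = 0 ∧ energyF d u = e}) :
    mGround d (massF d φ) ≤ energyF d φ - KF d φ := by
  have hD2 : (2:ℝ) ≤ (d:ℝ) := by exact_mod_cast hd
  set D := (d:ℝ) with hDdef
  set A := gradxSq d φ with hAdef
  set L := lpPow d φ (qExp d) with hLdef
  set gy := gradySq d φ with hgydef
  have hL0 : 0 ≤ L := lpPow_nonneg φ _
  have hB : A < D/(D+1) * L := by
    have h := hK
    rw [show KF d φ = A - D/(D+1) * L from rfl] at h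
    exact sub_neg.1 h
  have hDpos : (0:ℝ) < D := by linarith
  have hD1 : (0:ℝ) < D + 1 := by linarith
  have hcpos : (0:ℝ) < D/(D+1) := by positivity
  have hL : 0 < L := by
    rcases lt_or_ge 0 L with h | h
    · exact h
    · exact absurd (hA.trans hB) (not_lt.2 (mul_nonpos_iff.2 (Or.inl ⟨hcpos.le, h⟩)))
  have hBpos : 0 < D/(D+1) * L := by positivity
  have hα2 : 2 < alphaE d := by
    unfold alphaE
    rw [lt_div_iff₀ (by rw [← hDdef]; linarith [hd1 hd])]
    rw [← hDdef]; linarith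
  set α := alphaE d with hαdef
  set s := A / (D/(D+1) * L) with hsdef
  have hs0 : 0 < s := div_pos hA hBpos
  have hs1 : s < 1 := (div_lt_one hBpos).2 hB
  set t := s ^ ((α - 2)⁻¹ : ℝ) with htdef
  have ht : 0 < t := Real.rpow_pos_of_pos hs0 _
  have ht1 : t ≤ 1 :=
    Real.rpow_le_one hs0.le hs1.le (inv_nonneg.2 (by linarith))
  have hts : t ^ (α - 2 : ℝ) = s := by
    rw [htdef, ← Real.rpow_mul hs0.le, inv_mul_cancel₀ (by linarith), Real.rpow_one]
  have hAeq : A = t ^ (α - 2 : ℝ) * (D/(D+1) * L) := by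
    rw [hts, hsdef]
    field_simp
  have hQσ : t ^ 2 * t ^ (α - 2 : ℝ) = t ^ (α : ℝ) := by
    rw [← Real.rpow_natCast t 2, ← Real.rpow_add ht]
    norm_num
  set ψ := scalFun d t φ with hψdef
  have hmass := scal_mass φ ht
  have hgx := scal_gradx φ hφ.2.1 ht
  have hgy := scal_grady φ hφ.2.1 ht
  have hlp := scal_lp hd φ ht
  have hKψ : KF d ψ = 0 := by
    unfold KF
    rw [hgx, hlp, ← hαdef, ← hLdef, ← hAdef, ← hDdef]
    linear_combination (t^2) * hAeq + (D/(D+1)*L) * hQσ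
  have ht2A : t ^ 2 * A = t ^ (α : ℝ) * (D/(D+1) * L) := by
    linear_combination (t^2) * hAeq + (D/(D+1)*L) * hQσ
  have hmem : energyF d ψ ∈
      {e | ∃ u, InH1 d u ∧ massF d u = massF d φ ∧ KF d u = 0 ∧ energyF d u = e} :=
    ⟨ψ, scal_inH1 hd φ hφ ht, hmass, hKψ, rfl⟩
  have h1 : mGround d (massF d φ) ≤ energyF d ψ := csInf_le hbdd hmem
  refine h1.trans ?_
  have hEψ : energyF d ψ
      = (1/2) * (t ^ 2 * A + gy) - ((D-1)/(2*(D+1))) * (t ^ (α : ℝ) * L) := by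
    unfold energyF
    rw [hgx, hgy, hlp, ← hαdef, ← hLdef, ← hAdef, ← hgydef, ← hDdef]
  have hEφ : energyF d φ = (1/2) * (A + gy) - ((D-1)/(2*(D+1))) * L := rfl
  have hKφ : KF d φ = A - D/(D+1) * L := rfl
  rw [hEψ, hEφ, hKφ, ht2A, hAeq]
  set σ := t ^ (α - 2 : ℝ) with hσdef
  set Q := t ^ (α : ℝ) with hQdef
  have hσ0 : 0 ≤ σ := Real.rpow_nonneg ht.le _
  have hQ0 : 0 ≤ Q := Real.rpow_nonneg ht.le _
  have hσ1 : σ ≤ 1 := Real.rpow_le_one ht.le ht1 (by linarith)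
  have hQ1 : Q ≤ 1 := Real.rpow_le_one ht.le ht1 (by linarith)
  have hD1' : D + 1 ≠ 0 := ne_of_gt hD1
  have he0 : (0:ℝ) ≤ (D+1)⁻¹ := by positivity
  have hfac : 0 ≤ L * (D+1)⁻¹ * (1 - Q + (1 - σ) * D) :=
    mul_nonneg (mul_nonneg hL0 he0)
      (add_nonneg (sub_nonneg.2 hQ1) (mul_nonneg (sub_nonneg.2 hσ1) hDpos.le))
  rw [← sub_nonneg]
  have hid : 1 / 2 * (σ * (D / (D + 1) * L) + gy) - (D - 1) / (2 * (D + 1)) * L -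
      (σ * (D / (D + 1) * L) - D / (D + 1) * L) -
      (1 / 2 * (Q * (D / (D + 1) * L) + gy) - (D - 1) / (2 * (D + 1)) * (Q * L))
      = 1 / 2 * (L * (D + 1)⁻¹ * (1 - Q + (1 - σ) * D)) := by
    field_simp
    ring
  rw [hid]
  exact mul_nonneg (by norm_num) hfac


/-! #### The degenerate case `gradxSq φ = 0` -/

lemma gradx_integrable (φ : Edim d × ℝ → ℂ) (hφ : InH1 d φ) :
    IntegrableOn
      (fun z => ∑ i : Fin d, ‖fderiv ℝ φ z (EuclideanSpace.single i 1, 0)‖ ^ 2) (strip d) := by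
  refine Integrable.mono' (hφ.2.2.2.1.const_mul (d : ℝ)) ?_ ?_
  · exact (Finset.measurable_sum _ fun i _ =>
      ((measurable_fderiv_apply_const ℝ φ ((EuclideanSpace.single i 1 : Edim d), (0:ℝ))).norm.pow_const 2)).aestronglyMeasurable
  · refine Filter.Eventually.of_forall fun z => ?_
    rw [Real.norm_eq_abs, abs_of_nonneg (Finset.sum_nonneg fun i _ => sq_nonneg _)]
    calc (∑ i : Fin d, ‖fderiv ℝ φ z (EuclideanSpace.single i 1, 0)‖ ^ 2)
        ≤ ∑ _i : Fin d, ‖fderiv ℝ φ z‖ ^ 2 := by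
          refine Finset.sum_le_sum fun i _ => ?_
          have h1 : ‖fderiv ℝ φ z (EuclideanSpace.single i 1, 0)‖
              ≤ ‖fderiv ℝ φ z‖ * ‖((EuclideanSpace.single i 1 : Edim d), (0:ℝ))‖ :=
            (fderiv ℝ φ z).le_opNorm _
          have h2 : ‖((EuclideanSpace.single i 1 : Edim d), (0:ℝ))‖ = 1 := by
            rw [Prod.norm_def]
            simp [EuclideanSpace.norm_single]
          rw [h2, mul_one] at h1
          exact pow_le_pow_left₀ (norm_nonneg _) h1 2
      _ = (d : ℝ) * ‖fderiv ℝ φ z‖ ^ 2 := by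
          rw [Finset.sum_const, Finset.card_univ, Fintype.card_fin, nsmul_eq_mul]

lemma fderiv_x_ae_zero (φ : Edim d × ℝ → ℂ) (hφ : InH1 d φ) (hA : gradxSq d φ = 0) :
    ∀ᵐ z ∂(volume.restrict (strip d)),
      ∀ i : Fin d, fderiv ℝ φ z (EuclideanSpace.single i 1, 0) = 0 := by
  have h0 : (fun z => ∑ i : Fin d, ‖fderiv ℝ φ z (EuclideanSpace.single i 1, 0)‖ ^ 2)
      =ᵐ[volume.restrict (strip d)] 0 := by
    rw [← integral_eq_zero_iff_of_nonneg
      (fun z => Finset.sum_nonneg fun i _ => sq_nonneg _) (gradx_integrable φ hφ)]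
    exact hA
  filter_upwards [h0] with z hz
  intro i
  have hz' : ∑ i : Fin d, ‖fderiv ℝ φ z (EuclideanSpace.single i 1, 0)‖ ^ 2 = 0 := hz
  have := (Finset.sum_eq_zero_iff_of_nonneg
    (fun j (_ : j ∈ Finset.univ) => sq_nonneg
      ‖fderiv ℝ φ z (EuclideanSpace.single j 1, 0)‖)).1 hz' i (Finset.mem_univ i)
  have hnorm : ‖fderiv ℝ φ z (EuclideanSpace.single i 1, 0)‖ = 0 := by
    have := sq_eq_zero_iff.1 this
    exact this
  exact norm_eq_zero.1 hnorm

lemma mass_pos (hd : 2 ≤ d) (φ : Edim d × ℝ → ℂ) (hφ : InH1 d φ) (hK : KF d φ < 0) :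
    0 < massF d φ ∧ 0 < lpPow d φ (qExp d) := by
  have hD2 : (2:ℝ) ≤ (d:ℝ) := by exact_mod_cast hd
  have hA0 : 0 ≤ gradxSq d φ := gradxSq_nonneg φ
  have hL0 : 0 ≤ lpPow d φ (qExp d) := lpPow_nonneg φ _
  have hcpos : (0:ℝ) < (d:ℝ)/((d:ℝ)+1) := by positivity
  have hKval : KF d φ = gradxSq d φ - (d:ℝ)/((d:ℝ)+1) * lpPow d φ (qExp d) := rfl
  have hL : 0 < lpPow d φ (qExp d) := by
    rcases lt_or_ge 0 (lpPow d φ (qExp d)) with h | h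
    · exact h
    · exfalso
      have : (d:ℝ)/((d:ℝ)+1) * lpPow d φ (qExp d) ≤ 0 :=
        mul_nonpos_iff.2 (Or.inl ⟨hcpos.le, h⟩)
      rw [hKval] at hK
      linarith
  refine ⟨?_, hL⟩
  rcases lt_or_ge 0 (massF d φ) with h | h
  · exact h
  · exfalso
    have hM0 : massF d φ = 0 := le_antisymm h (massF_nonneg φ)
    have hae : (fun z => ‖φ z‖ ^ 2) =ᵐ[volume.restrict (strip d)] 0 := by
      rw [← integral_eq_zero_iff_of_nonneg (fun z => sq_nonneg _) hφ.2.2.1]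
      exact hM0
    have haeq : (fun z => ‖φ z‖ ^ qExp d) =ᵐ[volume.restrict (strip d)] 0 := by
      filter_upwards [hae] with z hz
      have : ‖φ z‖ ^ 2 = 0 := hz
      have hz0 : ‖φ z‖ = 0 := by
        have := sq_eq_zero_iff.1 this
        exact this
      have hq0 : qExp d ≠ 0 := by
        have := hd1 hd
        have h4 : (0:ℝ) ≤ 4 / ((d:ℝ) - 1) := div_nonneg (by norm_num) (by linarith)
        unfold qExp; intro hcon; linarith [hcon ▸ (by linarith : (0:ℝ) < 2 + 4 / ((d:ℝ) - 1))]
      show ‖φ z‖ ^ qExp d = 0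
      rw [hz0, Real.zero_rpow hq0]
    have : lpPow d φ (qExp d) = 0 := by
      unfold lpPow
      rw [integral_congr_ae haeq]
      simp
    linarith


/-! #### Modulation -/

def Cmod (d : ℕ) (i : Fin d) (ξ : ℝ) : (Edim d × ℝ) →L[ℝ] ℂ :=
  (Complex.I * (ξ:ℂ)) • (Complex.ofRealCLM.comp
    ((EuclideanSpace.proj i).comp (ContinuousLinearMap.fst ℝ (Edim d) ℝ)))

variable {i : Fin d} {ξ : ℝ}

lemma Cmod_apply (z : Edim d × ℝ) :
    Cmod d i ξ z = Complex.I * (ξ:ℂ) * ((z.1 i : ℝ) : ℂ) := rfl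

lemma Cmod_norm_exp (z : Edim d × ℝ) : ‖Complex.exp (Cmod d i ξ z)‖ = 1 := by
  rw [Cmod_apply, Complex.norm_exp]
  have : (Complex.I * (ξ:ℂ) * ((z.1 i : ℝ) : ℂ)).re = 0 := by simp
  rw [this, Real.exp_zero]

def modFun (d : ℕ) (i : Fin d) (ξ : ℝ) (φ : Edim d × ℝ → ℂ) : Edim d × ℝ → ℂ :=
  fun z => Complex.exp (Cmod d i ξ z) * φ z

lemma mod_norm (φ : Edim d × ℝ → ℂ) (z : Edim d × ℝ) :
    ‖modFun d i ξ φ z‖ = ‖φ z‖ := by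
  rw [modFun, norm_mul, Cmod_norm_exp, one_mul]

lemma mod_hasFDerivAt (φ : Edim d × ℝ → ℂ) (hφd : Differentiable ℝ φ) (z : Edim d × ℝ) :
    HasFDerivAt (modFun d i ξ φ)
      (Complex.exp (Cmod d i ξ z) • fderiv ℝ φ z
        + φ z • (Complex.exp (Cmod d i ξ z) • Cmod d i ξ)) z := by
  have h1 : HasFDerivAt (fun w => Complex.exp (Cmod d i ξ w))
      (Complex.exp (Cmod d i ξ z) • Cmod d i ξ) z := (Cmod d i ξ).hasFDerivAt.cexp
  exact h1.mul (hφd z).hasFDerivAt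

lemma mod_fderiv_apply (φ : Edim d × ℝ → ℂ) (hφd : Differentiable ℝ φ) (z : Edim d × ℝ)
    (v : Edim d × ℝ) :
    fderiv ℝ (modFun d i ξ φ) z v
      = Complex.exp (Cmod d i ξ z) * (fderiv ℝ φ z v)
        + φ z * (Complex.exp (Cmod d i ξ z) * (Complex.I * (ξ:ℂ) * ((v.1 i : ℝ) : ℂ))) := by
  rw [(mod_hasFDerivAt φ hφd z).fderiv]
  simp only [ContinuousLinearMap.add_apply, ContinuousLinearMap.coe_smul', Pi.smul_apply,
    smul_eq_mul, Cmod_apply]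
  try ring

lemma mod_differentiable (φ : Edim d × ℝ → ℂ) (hφd : Differentiable ℝ φ) :
    Differentiable ℝ (modFun d i ξ φ) :=
  fun z => (mod_hasFDerivAt φ hφd z).differentiableAt

lemma mod_fderiv_y (φ : Edim d × ℝ → ℂ) (hφd : Differentiable ℝ φ) (z : Edim d × ℝ) :
    ‖fderiv ℝ (modFun d i ξ φ) z ((0 : Edim d), (1:ℝ))‖ = ‖fderiv ℝ φ z ((0 : Edim d), (1:ℝ))‖ := by
  rw [mod_fderiv_apply φ hφd z]
  have h0 : (((0 : Edim d), (1:ℝ)).1 i : ℝ) = 0 := rfl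
  rw [h0]
  simp [norm_mul, Cmod_norm_exp z]

lemma mod_fderiv_x_sum (φ : Edim d × ℝ → ℂ) (hφd : Differentiable ℝ φ) (z : Edim d × ℝ)
    (hz : ∀ j : Fin d, fderiv ℝ φ z (EuclideanSpace.single j 1, 0) = 0) :
    ∑ j : Fin d, ‖fderiv ℝ (modFun d i ξ φ) z (EuclideanSpace.single j 1, 0)‖ ^ 2
      = ξ ^ 2 * ‖φ z‖ ^ 2 := by
  have hterm : ∀ j : Fin d,
      ‖fderiv ℝ (modFun d i ξ φ) z (EuclideanSpace.single j 1, 0)‖ ^ 2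
        = (if i = j then (1:ℝ) else 0) * (ξ ^ 2 * ‖φ z‖ ^ 2) := by
    intro j
    rw [mod_fderiv_apply φ hφd z, hz j, mul_zero, zero_add]
    have hsj : (((EuclideanSpace.single j 1 : Edim d), (0:ℝ)).1 i : ℝ)
        = if i = j then (1:ℝ) else 0 := EuclideanSpace.single_apply j 1 i
    rw [hsj]
    by_cases hij : i = j
    · rw [if_pos hij, one_mul]
      rw [norm_mul, norm_mul, Cmod_norm_exp, one_mul, norm_mul, norm_mul]
      simp only [Complex.norm_I, Complex.norm_real, Real.norm_eq_abs, Complex.ofReal_one,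
        norm_one, one_mul, mul_one]
      rw [mul_pow, sq_abs]
      ring
    · rw [if_neg hij]
      simp
  rw [Finset.sum_congr rfl fun j _ => hterm j, ← Finset.sum_mul]
  simp


lemma mod_mass (φ : Edim d × ℝ → ℂ) : massF d (modFun d i ξ φ) = massF d φ := by
  unfold massF; simp only [mod_norm]

lemma mod_lp (φ : Edim d × ℝ → ℂ) (p : ℝ) : lpPow d (modFun d i ξ φ) p = lpPow d φ p := by
  unfold lpPow; simp only [mod_norm]

lemma mod_grady (φ : Edim d × ℝ → ℂ) (hφd : Differentiable ℝ φ) :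
    gradySq d (modFun d i ξ φ) = gradySq d φ := by
  unfold gradySq; simp only [mod_fderiv_y φ hφd]

lemma mod_gradx (φ : Edim d × ℝ → ℂ) (hφ : InH1 d φ) (hA : gradxSq d φ = 0) :
    gradxSq d (modFun d i ξ φ) = ξ ^ 2 * massF d φ := by
  have hae := fderiv_x_ae_zero φ hφ hA
  have hcong : (fun z => ∑ j : Fin d,
      ‖fderiv ℝ (modFun d i ξ φ) z (EuclideanSpace.single j 1, 0)‖ ^ 2)
      =ᵐ[volume.restrict (strip d)] (fun z => ξ ^ 2 * ‖φ z‖ ^ 2) := by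
    filter_upwards [hae] with z hz
    exact mod_fderiv_x_sum φ hφ.2.1 z hz
  unfold gradxSq massF
  rw [integral_congr_ae hcong, integral_const_mul]

lemma mod_inH1 (φ : Edim d × ℝ → ℂ) (hφ : InH1 d φ) : InH1 d (modFun d i ξ φ) := by
  obtain ⟨hper, hdiff, hint2, hintD, hintq⟩ := hφ
  refine ⟨?_, mod_differentiable φ hdiff, ?_, ?_, ?_⟩
  · intro x y
    unfold modFun
    rw [hper]
    rfl
  · simp only [mod_norm]; exact hint2
  · have hmeas : AEStronglyMeasurable (fun z => ‖fderiv ℝ (modFun d i ξ φ) z‖ ^ 2)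
        (volume.restrict (strip d)) :=
      (((measurable_fderiv ℝ (modFun d i ξ φ)).norm).pow_const 2).aestronglyMeasurable
    refine Integrable.mono'
      (((hintD.const_mul 2).add (hint2.const_mul (2 * ‖Cmod d i ξ‖ ^ 2)))) hmeas ?_
    refine Filter.Eventually.of_forall fun z => ?_
    rw [Real.norm_eq_abs, abs_of_nonneg (by positivity)]
    have hrw : fderiv ℝ (modFun d i ξ φ) z
        = Complex.exp (Cmod d i ξ z) • fderiv ℝ φ z
          + φ z • (Complex.exp (Cmod d i ξ z) • Cmod d i ξ) :=
      (mod_hasFDerivAt φ hdiff z).fderiv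
    have hb : ‖fderiv ℝ (modFun d i ξ φ) z‖
        ≤ ‖fderiv ℝ φ z‖ + ‖Cmod d i ξ‖ * ‖φ z‖ := by
      rw [hrw]
      calc ‖Complex.exp (Cmod d i ξ z) • fderiv ℝ φ z
            + φ z • (Complex.exp (Cmod d i ξ z) • Cmod d i ξ)‖
          ≤ ‖Complex.exp (Cmod d i ξ z) • fderiv ℝ φ z‖
            + ‖φ z • (Complex.exp (Cmod d i ξ z) • Cmod d i ξ)‖ := norm_add_le _ _
        _ ≤ ‖Complex.exp (Cmod d i ξ z)‖ * ‖fderiv ℝ φ z‖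
            + ‖φ z‖ * (‖Complex.exp (Cmod d i ξ z)‖ * ‖Cmod d i ξ‖) := by
            refine add_le_add (ContinuousLinearMap.opNorm_smul_le _ _) ?_
            refine (ContinuousLinearMap.opNorm_smul_le _ _).trans ?_
            exact mul_le_mul_of_nonneg_left (ContinuousLinearMap.opNorm_smul_le _ _)
              (norm_nonneg _)
        _ = ‖fderiv ℝ φ z‖ + ‖Cmod d i ξ‖ * ‖φ z‖ := by
            rw [Cmod_norm_exp z]; ring
    have hsq : ‖fderiv ℝ (modFun d i ξ φ) z‖ ^ 2
        ≤ (‖fderiv ℝ φ z‖ + ‖Cmod d i ξ‖ * ‖φ z‖) ^ 2 :=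
      pow_le_pow_left₀ (norm_nonneg _) hb 2
    have h2 : (‖fderiv ℝ φ z‖ + ‖Cmod d i ξ‖ * ‖φ z‖) ^ 2
        ≤ 2 * ‖fderiv ℝ φ z‖ ^ 2 + 2 * ‖Cmod d i ξ‖ ^ 2 * ‖φ z‖ ^ 2 := by
      nlinarith [sq_nonneg (‖fderiv ℝ φ z‖ - ‖Cmod d i ξ‖ * ‖φ z‖)]
    calc ‖fderiv ℝ (modFun d i ξ φ) z‖ ^ 2
        ≤ 2 * ‖fderiv ℝ φ z‖ ^ 2 + 2 * ‖Cmod d i ξ‖ ^ 2 * ‖φ z‖ ^ 2 := hsq.trans h2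
      _ = 2 * ‖fderiv ℝ φ z‖ ^ 2 + 2 * ‖Cmod d i ξ‖ ^ 2 * ‖φ z‖ ^ 2 := rfl
  · simp only [mod_norm]; exact hintq

lemma key_lemma_deg (hd : 2 ≤ d) (φ : Edim d × ℝ → ℂ) (hφ : InH1 d φ) (hK : KF d φ < 0)
    (hA : gradxSq d φ = 0)
    (hbdd : BddBelow {e | ∃ u, InH1 d u ∧ massF d u = massF d φ ∧ KF d u = 0 ∧ energyF d u = e}) :
    mGround d (massF d φ) ≤ energyF d φ - KF d φ := by
  obtain ⟨hM, hL⟩ := mass_pos hd φ hφ hK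
  have hd0 : 0 < d := by omega
  set i0 : Fin d := ⟨0, hd0⟩
  set ξ := Real.sqrt (-KF d φ / (2 * massF d φ)) with hξdef
  have hξsq : ξ ^ 2 = -KF d φ / (2 * massF d φ) :=
    Real.sq_sqrt (div_nonneg (by linarith) (by linarith))
  set u := modFun d i0 ξ φ with hudef
  have hmass : massF d u = massF d φ := mod_mass φ
  have hgx : gradxSq d u = ξ ^ 2 * massF d φ := mod_gradx φ hφ hA
  have hgy : gradySq d u = gradySq d φ := mod_grady φ hφ.2.1
  have hlp : lpPow d u (qExp d) = lpPow d φ (qExp d) := mod_lp φ _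
  have hxm : ξ ^ 2 * massF d φ = -KF d φ / 2 := by
    rw [hξsq]
    field_simp
  have hKu : KF d u = ξ ^ 2 * massF d φ + KF d φ := by
    rw [show KF d u = gradxSq d u - (d:ℝ)/((d:ℝ)+1) * lpPow d u (qExp d) from rfl,
      show KF d φ = gradxSq d φ - (d:ℝ)/((d:ℝ)+1) * lpPow d φ (qExp d) from rfl,
      hgx, hlp, hA]
    ring
  have hKuneg : KF d u < 0 := by rw [hKu, hxm]; linarith
  have hgxu : 0 < gradxSq d u := by rw [hgx, hxm]; linarith
  have hmain := key_lemma hd u (mod_inH1 φ hφ) hKuneg hgxu (by rw [hmass]; exact hbdd)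
  rw [hmass] at hmain
  have hEu : energyF d u = energyF d φ + ξ ^ 2 * massF d φ / 2 := by
    rw [show energyF d u = (1/2) * (gradxSq d u + gradySq d u)
        - (((d:ℝ)-1)/(2*((d:ℝ)+1))) * lpPow d u (qExp d) from rfl,
      show energyF d φ = (1/2) * (gradxSq d φ + gradySq d φ)
        - (((d:ℝ)-1)/(2*((d:ℝ)+1))) * lpPow d φ (qExp d) from rfl,
      hgx, hgy, hlp, hA]
    ring
  have hx0 : 0 ≤ ξ ^ 2 * massF d φ := by positivity
  linarith [hmain, hEu, hKu]

end Aux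

theorem virial_gap_aux (d : ℕ) (hd : 2 ≤ d) (φ : Edim d × ℝ → ℂ)
    (hφ : InH1 d φ) (hK : KF d φ < 0) :
    KF d φ ≤ energyF d φ - mGround d (massF d φ) := by
  by_cases hbdd : BddBelow
      {e | ∃ u, InH1 d u ∧ massF d u = massF d φ ∧ KF d u = 0 ∧ energyF d u = e}
  · rcases (gradxSq_nonneg (d := d) φ).eq_or_lt with hA | hA
    · linarith [key_lemma_deg hd φ hφ hK hA.symm hbdd]
    · linarith [key_lemma hd φ hφ hK hA hbdd]
  · have hm : mGround d (massF d φ) = 0 := by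
      rw [mGround]
      exact Real.sInf_of_not_bddBelow hbdd
    rw [hm, sub_zero]
    have hD2 : (2:ℝ) ≤ (d:ℝ) := by exact_mod_cast hd
    have hD1 : (0:ℝ) < (d:ℝ) + 1 := by linarith
    have hL0 : 0 ≤ lpPow d φ (qExp d) := lpPow_nonneg φ _
    have hgy0 : 0 ≤ gradySq d φ := gradySq_nonneg φ
    have hKval : KF d φ = gradxSq d φ - (d:ℝ)/((d:ℝ)+1) * lpPow d φ (qExp d) := rfl
    have hc1 : (d:ℝ)/((d:ℝ)+1) ≤ 1 := by
      rw [div_le_one hD1]; linarith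
    have hAL : gradxSq d φ < lpPow d φ (qExp d) := by
      have h1 : gradxSq d φ < (d:ℝ)/((d:ℝ)+1) * lpPow d φ (qExp d) := by
        rw [hKval] at hK; linarith
      exact h1.trans_le (mul_le_of_le_one_left hL0 hc1)
    have hid : energyF d φ - KF d φ
        = 1/2 * gradySq d φ + 1/2 * (lpPow d φ (qExp d) - gradxSq d φ) := by
      rw [show energyF d φ = (1/2) * (gradxSq d φ + gradySq d φ)
          - (((d:ℝ)-1)/(2*((d:ℝ)+1))) * lpPow d φ (qExp d) from rfl, hKval]
      have hne : ((d:ℝ)+1) ≠ 0 := ne_of_gt hD1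
      field_simp
      ring
    linarith [hid]

/-- If `φ ∈ H¹(ℝ^d × 𝕋)` satisfies `E(φ) < m_{M(φ)}` and `K(φ) < 0`, then
`K(φ) ≤ E(φ) − m_{M(φ)}`. -/
theorem virial_gap_below_threshold (d : ℕ) (hd : 2 ≤ d) (φ : Edim d × ℝ → ℂ)
    (hφ : InH1 d φ) (hE : energyF d φ < mGround d (massF d φ)) (hK : KF d φ < 0) :
    KF d φ ≤ energyF d φ - mGround d (massF d φ) :=
  virial_gap_aux d hd φ hφ hK
end
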